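/- arXiv:1303.3978 — 2 statements merged into one kernel-verified Lean document; each statement's English description precedes it below -/
import Mathlib

section
/- As q → 1⁻, the normalizing constant c₁ = δ [a(1-q)]^{(γ+1)/δ} Γ((γ+1)/δ + η/(1-q) + 1) / (Γ((γ+1)/δ) Γ(η/(1-q)+1)) of the pathway density converges to c₁* = δ (aη)^{(γ+1)/δ} / Γ((γ+1)/δ), for a > 0, η > 0, δ > 0, γ > -1. -/
open Real Filter Topology

private lemma wendel_upper {x β : ℝ} (hx : 0 < x) (hβ0 : 0 < β) (hβ1 : β < 1) :
    Gamma (x + β) ≤ Gamma x * x ^ β := by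
  have hΓx := Real.Gamma_pos_of_pos hx
  have key := Real.Gamma_mul_add_mul_le_rpow_Gamma_mul_rpow_Gamma hx
    (by linarith : (0:ℝ) < x + 1) (by linarith : 0 < 1 - β) hβ0 (by ring)
  rw [Real.Gamma_add_one hx.ne'] at key
  have h2 : (1 - β) * x + β * (x + 1) = x + β := by ring
  rw [h2, mul_rpow hx.le hΓx.le] at key
  calc Gamma (x + β) ≤ Gamma x ^ (1 - β) * (x ^ β * Gamma x ^ β) := key
    _ = Gamma x ^ (1 - β + β) * x ^ β := by rw [rpow_add hΓx]; ring
    _ = Gamma x * x ^ β := by norm_num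

private lemma wendel_lower {x β : ℝ} (hx : 0 < x) (hβ0 : 0 < β) (hβ1 : β < 1) :
    Gamma x * x ≤ Gamma (x + β) * (x + β) ^ (1 - β) := by
  have hxβ : 0 < x + β := by linarith
  have hΓ := Real.Gamma_pos_of_pos hxβ
  have key := Real.Gamma_mul_add_mul_le_rpow_Gamma_mul_rpow_Gamma hxβ
    (by linarith : (0:ℝ) < x + β + 1) hβ0 (by linarith : 0 < 1 - β) (by ring)
  rw [Real.Gamma_add_one hxβ.ne'] at key
  have h2 : β * (x + β) + (1 - β) * (x + β + 1) = x + 1 := by ring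
  rw [h2, mul_rpow hxβ.le hΓ.le, Real.Gamma_add_one hx.ne'] at key
  calc Gamma x * x = x * Gamma x := by ring
    _ ≤ Gamma (x + β) ^ β * ((x + β) ^ (1 - β) * Gamma (x + β) ^ (1 - β)) := key
    _ = Gamma (x + β) ^ (β + (1 - β)) * (x + β) ^ (1 - β) := by rw [rpow_add hΓ]; ring
    _ = Gamma (x + β) * (x + β) ^ (1 - β) := by norm_num

/-- Wendel: Γ(x+β)/(Γ(x) x^β) → 1 for β ∈ (0,1). -/
private lemma wendel01 {β : ℝ} (hβ0 : 0 < β) (hβ1 : β < 1) :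
    Tendsto (fun x : ℝ => Gamma (x + β) / (Gamma x * x ^ β)) atTop (𝓝 1) := by
  have hlo : Tendsto (fun x : ℝ => (x / (x + β)) ^ (1 - β)) atTop (𝓝 1) := by
    have h1 : Tendsto (fun x : ℝ => x / (x + β)) atTop (𝓝 1) := by
      have h2 : Tendsto (fun x : ℝ => 1 + β / x) atTop (𝓝 1) := by
        have := (tendsto_inv_atTop_zero (𝕜 := ℝ)).const_mul β
        simpa [div_eq_mul_inv] using tendsto_const_nhds.add this
      have h3 : Tendsto (fun x : ℝ => (1 + β / x)⁻¹) atTop (𝓝 1) := by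
        simpa using h2.inv₀ one_ne_zero
      refine h3.congr' ?_
      filter_upwards [eventually_gt_atTop 0] with x hx
      field_simp
    have := h1.rpow_const (p := 1 - β) (Or.inr (by linarith))
    simpa using this
  refine tendsto_of_tendsto_of_tendsto_of_le_of_le' hlo tendsto_const_nhds ?_ ?_
  · filter_upwards [eventually_gt_atTop 0] with x hx
    have hxβ : 0 < x + β := by linarith
    have hΓx := Real.Gamma_pos_of_pos hx
    have hΓ := Real.Gamma_pos_of_pos hxβ
    have key := wendel_lower hx hβ0 hβ1
    rw [div_rpow hx.le hxβ.le, div_le_div_iff₀ (by positivity) (by positivity)]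
    calc x ^ (1 - β) * (Gamma x * x ^ β) = Gamma x * x ^ (1 - β + β) := by
            rw [rpow_add hx]; ring
      _ = Gamma x * x := by norm_num [rpow_one]
      _ ≤ Gamma (x + β) * (x + β) ^ (1 - β) := key
  · filter_upwards [eventually_gt_atTop 0] with x hx
    have hΓx := Real.Gamma_pos_of_pos hx
    rw [div_le_one (by positivity)]
    exact wendel_upper hx hβ0 hβ1

/-- Wendel's asymptotic for all positive β. -/
private lemma wendel : ∀ n : ℕ, ∀ β : ℝ, 0 < β → β ≤ n + 1 →
    Tendsto (fun x : ℝ => Gamma (x + β) / (Gamma x * x ^ β)) atTop (𝓝 1) := by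
  intro n
  induction n with
  | zero =>
    intro β hβ0 hβ1
    norm_num at hβ1
    rcases eq_or_lt_of_le hβ1 with h | h
    · subst h
      refine Tendsto.congr' ?_ tendsto_const_nhds
      filter_upwards [eventually_gt_atTop 0] with x hx
      have hΓx := Real.Gamma_pos_of_pos hx
      rw [Real.Gamma_add_one hx.ne', rpow_one]
      field_simp
    · exact wendel01 hβ0 h
  | succ n ih =>
    intro β hβ0 hβn
    by_cases h : β ≤ n + 1
    · exact ih β hβ0 h
    push_neg at h
    have hβ1 : 0 < β - 1 := by
      have h0 : (0:ℝ) ≤ n := Nat.cast_nonneg n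
      linarith
    have hprev := ih (β - 1) hβ1 (by push_cast at hβn ⊢; linarith)
    have hfac : Tendsto (fun x : ℝ => (x + (β - 1)) / x) atTop (𝓝 1) := by
      have h2 : Tendsto (fun x : ℝ => 1 + (β - 1) / x) atTop (𝓝 1) := by
        have := (tendsto_inv_atTop_zero (𝕜 := ℝ)).const_mul (β - 1)
        simpa [div_eq_mul_inv] using tendsto_const_nhds.add this
      refine h2.congr' ?_
      filter_upwards [eventually_gt_atTop 0] with x hx
      field_simp
    have hmul := hfac.mul hprev
    rw [mul_one] at hmul
    refine hmul.congr' ?_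
    filter_upwards [eventually_gt_atTop 0] with x hx
    have hxβ : 0 < x + (β - 1) := by linarith
    have hΓx := Real.Gamma_pos_of_pos hx
    have hΓ := Real.Gamma_pos_of_pos hxβ
    have hG : Gamma (x + β) = (x + (β - 1)) * Gamma (x + (β - 1)) := by
      rw [show x + β = (x + (β - 1)) + 1 by ring, Real.Gamma_add_one hxβ.ne']
    have hr : x ^ β = x ^ (β - 1) * x := by
      rw [← rpow_add_one hx.ne' (β - 1), sub_add_cancel]
    rw [hG, hr]
    have hxr : (0:ℝ) < x ^ (β - 1) := rpow_pos_of_pos hx _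
    field_simp

theorem stmt5 (γ δ η a : ℝ) (hγ : -1 < γ) (hδ : 0 < δ) (hη : 0 < η)
    (ha : 0 < a) :
    Filter.Tendsto
      (fun q : ℝ => δ * (a * (1 - q)) ^ ((γ + 1) / δ) *
        Real.Gamma ((γ + 1) / δ + η / (1 - q) + 1) /
        (Real.Gamma ((γ + 1) / δ) * Real.Gamma (η / (1 - q) + 1)))
      (nhdsWithin 1 (Set.Iio 1))
      (nhds (δ * (a * η) ^ ((γ + 1) / δ) / Real.Gamma ((γ + 1) / δ))) := by
  set β := (γ + 1) / δ with hβ_def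
  have hβ : 0 < β := div_pos (by linarith) hδ
  have hΓβ : 0 < Real.Gamma β := Real.Gamma_pos_of_pos hβ
  -- w q := η/(1-q) + 1 tends to atTop
  have hs : Tendsto (fun q : ℝ => 1 - q) (nhdsWithin 1 (Set.Iio 1)) (nhdsWithin 0 (Set.Ioi 0)) := by
    refine tendsto_nhdsWithin_of_tendsto_nhds_of_eventually_within _ ?_ ?_
    · have h0 : Tendsto (fun q : ℝ => 1 - q) (nhds 1) (nhds (1 - 1)) :=
        Continuous.tendsto (by fun_prop) 1
      norm_num at h0
      exact h0.mono_left nhdsWithin_le_nhds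
    · filter_upwards [self_mem_nhdsWithin] with q hq
      exact sub_pos.mpr (Set.mem_Iio.mp hq)
  have hw : Tendsto (fun q : ℝ => η / (1 - q) + 1) (nhdsWithin 1 (Set.Iio 1)) atTop := by
    have h1 : Tendsto (fun q : ℝ => η / (1 - q)) (nhdsWithin 1 (Set.Iio 1)) atTop := by
      have h2 : Tendsto (fun x : ℝ => η / x) (nhdsWithin 0 (Set.Ioi 0)) atTop := by
        simpa [div_eq_mul_inv] using tendsto_inv_nhdsGT_zero.const_mul_atTop hη
      exact h2.comp hs
    exact tendsto_atTop_add_const_right _ 1 h1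
  -- the Wendel ratio tends to 1 along q → 1⁻
  obtain ⟨n, hn⟩ := exists_nat_ge β
  have hW := (wendel n β hβ (by have := hn; linarith)).comp hw
  -- a * (η + (1-q)) tends to a * η
  have hc : Tendsto (fun q : ℝ => (a * (η + (1 - q))) ^ β)
      (nhdsWithin 1 (Set.Iio 1)) (nhds ((a * η) ^ β)) := by
    have h1 : Tendsto (fun q : ℝ => a * (η + (1 - q))) (nhdsWithin 1 (Set.Iio 1))
        (nhds (a * η)) := by
      have h2 : Tendsto (fun q : ℝ => a * (η + (1 - q))) (nhds 1) (nhds (a * (η + (1 - 1)))) :=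
        Continuous.tendsto (by fun_prop) 1
      norm_num at h2
      exact h2.mono_left nhdsWithin_le_nhds
    exact h1.rpow_const (Or.inl (by positivity))
  have hmain := ((hc.mul hW).const_mul (δ / Real.Gamma β))
  rw [mul_one] at hmain
  have hlim : δ / Real.Gamma β * ((a * η) ^ β) = δ * (a * η) ^ β / Real.Gamma β := by ring
  rw [hlim] at hmain
  refine hmain.congr' ?_
  filter_upwards [self_mem_nhdsWithin] with q (hq : q < 1)
  have hsq : 0 < 1 - q := by linarith
  set w : ℝ := η / (1 - q) + 1 with hw_def
  have hw0 : 0 < w := by positivity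
  have hΓw : 0 < Real.Gamma w := Real.Gamma_pos_of_pos hw0
  have hΓwβ : 0 < Real.Gamma (w + β) := Real.Gamma_pos_of_pos (by positivity)
  have hwr : (0:ℝ) < w ^ β := rpow_pos_of_pos hw0 _
  have hGeq : Real.Gamma (β + η / (1 - q) + 1) = Real.Gamma (w + β) := by
    congr 1
    rw [hw_def]; ring
  have hseq : a * (η + (1 - q)) = (a * (1 - q)) * w := by
    rw [hw_def]
    field_simp
  have hrp : (a * (η + (1 - q))) ^ β = (a * (1 - q)) ^ β * w ^ β := by
    rw [hseq, mul_rpow (by positivity) hw0.le]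
  show δ / Real.Gamma β * ((a * (η + (1 - q))) ^ β * ((fun x => Real.Gamma (x + β) / (Real.Gamma x * x ^ β)) w)) = _
  rw [hrp]
  simp only []
  rw [hGeq]
  field_simp
end

section
/- For α > 0, ζ > 0, real s with ζ + 1 - s > 0, and f : (0,∞) → ℝ nonnegative with finite Mellin transform f*(s) = ∫₀^∞ v^{s-1} f(v) dv, the Mellin transform of the Kober operator of the first kind I_u^{ζ,α} f = (u^{-ζ-α}/Γ(α)) ∫₀^u (u-v)^{α-1} v^ζ f(v) dv satisfies ∫₀^∞ u^{s-1} (I_u^{ζ,α} f)(u) du = (Γ(ζ+1-s)/Γ(α+ζ+1-s)) f*(s). -/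
open MeasureTheory Set Real

/-- Kober fractional integral operator of the first kind. -/
noncomputable def koberFirst (ζ α : ℝ) (f : ℝ → ℝ) (u : ℝ) : ℝ :=
  (u ^ (-ζ - α) / Real.Gamma α) * ∫ v in Set.Ioo (0:ℝ) u, (u - v) ^ (α - 1) * v ^ ζ * f v

/-!
Swapping the order of integration over the triangle `0 < v < u` leaves, for each `v > 0`, the
inner integral `∫_{u > v} u ^ (s - ζ - α - 1) (u - v) ^ (α - 1) du`. The substitution
`u = v / (1 - t)` turns it into `v ^ (s - ζ - 1)` times the Beta integral
`B(α, ζ + 1 - s) = Γ(α) Γ(ζ + 1 - s) / Γ(α + ζ + 1 - s)`, and the factor `Γ(α)` cancels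
against the normalisation of the operator.
-/

theorem Real.integral_Ioo_rpow_mul_one_sub_rpow {a b : ℝ} (ha : 0 < a) (hb : 0 < b) :
    ∫ t in Ioo (0:ℝ) 1, t ^ (a - 1) * (1 - t) ^ (b - 1) =
      Gamma a * Gamma b / Gamma (a + b) := by
  apply Complex.ofReal_injective
  have hbeta := Complex.betaIntegral_eq_Gamma_mul_div a b (by simpa using ha) (by simpa using hb)
  rw [Complex.betaIntegral, intervalIntegral.integral_of_le zero_le_one,
    integral_Ioc_eq_integral_Ioo] at hbeta
  push_cast [← Complex.Gamma_ofReal]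
  rw [← hbeta, ← integral_complex_ofReal]
  refine setIntegral_congr_fun measurableSet_Ioo fun t ht => ?_
  push_cast [Complex.ofReal_cpow ht.1.le, Complex.ofReal_cpow (sub_pos.2 ht.2).le]
  rfl

theorem integral_Ioi_rpow_mul_sub_rpow_eq_integral_Ioo {a b v : ℝ} (hv : 0 < v) :
    ∫ u in Ioi v, u ^ (-(a + b)) * (u - v) ^ (a - 1) =
      v ^ (-b) * ∫ t in Ioo (0:ℝ) 1, t ^ (a - 1) * (1 - t) ^ (b - 1) := by
  have himg : (fun t => v / (1 - t)) '' Ioo 0 1 = Ioi v := by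
    ext u
    constructor
    · rintro ⟨t, ⟨ht0, ht1⟩, rfl⟩
      exact (lt_div_iff₀ (sub_pos.2 ht1)).2 (by nlinarith)
    · intro hu
      have hu0 : 0 < u := hv.trans hu
      refine ⟨1 - v / u, ⟨?_, ?_⟩, by simp [div_div_cancel₀ hv.ne']⟩
      · linarith [(div_lt_one hu0).2 hu]
      · linarith [div_pos hv hu0]
  have hderiv : ∀ t ∈ Ioo (0:ℝ) 1,
      HasDerivWithinAt (fun t => v / (1 - t)) (v / (1 - t) ^ 2) (Ioo 0 1) t := by
    intro t ht
    have hd := ((hasDerivAt_id t).const_sub 1).inv (sub_pos.2 ht.2).ne' |>.const_mul v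
    exact (hd.congr_deriv (by simp [div_eq_mul_inv])).hasDerivWithinAt
  have hinj : InjOn (fun t => v / (1 - t)) (Ioo 0 1) := by
    intro t₁ ht₁ t₂ ht₂ h
    have h' : v / (1 - t₁) = v / (1 - t₂) := h
    rw [div_eq_div_iff (sub_pos.2 ht₁.2).ne' (sub_pos.2 ht₂.2).ne'] at h'
    nlinarith
  rw [← himg, integral_image_eq_integral_abs_deriv_smul measurableSet_Ioo hderiv hinj,
    ← integral_const_mul]
  refine setIntegral_congr_fun measurableSet_Ioo fun t ⟨ht0, ht1⟩ => ?_
  have hw : 0 < 1 - t := sub_pos.2 ht1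
  rw [show v / (1 - t) - v = v * t / (1 - t) by field_simp; ring, smul_eq_mul,
    abs_of_pos (by positivity)]
  simp only [div_rpow hv.le hw.le, div_rpow (mul_pos hv ht0).le hw.le, mul_rpow hv.le ht0.le,
    rpow_neg hv.le, rpow_neg hw.le, rpow_sub hv, rpow_sub hw, rpow_add hv, rpow_add hw, rpow_one]
  field_simp

theorem integral_Ioi_integral_Ioo_eq_integral_Ioi_integral_Ioi {E : Type*}
    [NormedAddCommGroup E] [NormedSpace ℝ E] [CompleteSpace E] {F : ℝ × ℝ → E}
    (hF : IntegrableOn F {p | 0 < p.2 ∧ p.2 < p.1}) :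
    ∫ u in Ioi 0, ∫ v in Ioo 0 u, F (u, v) = ∫ v in Ioi 0, ∫ u in Ioi v, F (u, v) := by
  set S : Set (ℝ × ℝ) := {p | 0 < p.2 ∧ p.2 < p.1}
  have hS : MeasurableSet S :=
    (measurableSet_lt measurable_const measurable_snd).inter
      (measurableSet_lt measurable_snd measurable_fst)
  have hleft : ∀ u, ∫ v in Ioo 0 u, F (u, v) = ∫ v, S.indicator F (u, v) := fun u => by
    rw [← integral_indicator measurableSet_Ioo]
    rfl
  have hright : ∀ v ∈ Ioi 0, ∫ u in Ioi v, F (u, v) = ∫ u, S.indicator F (u, v) :=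
    fun v hv => by
      rw [← integral_indicator measurableSet_Ioi]
      congr 1 with u
      by_cases hu : v < u
      · simp [S, hu, mem_Ioi.1 hv]
      · simp [S, hu]
  calc ∫ u in Ioi 0, ∫ v in Ioo 0 u, F (u, v)
      = ∫ u, ∫ v, S.indicator F (u, v) := by
        rw [setIntegral_eq_integral_of_forall_compl_eq_zero fun u hu => by
          simp [Ioo_eq_empty (mt mem_Ioi.2 hu)]]
        simp_rw [hleft]
    _ = ∫ v, ∫ u, S.indicator F (u, v) :=
        integral_integral_swap ((integrable_indicator_iff hS).2 hF)
    _ = ∫ v in Ioi 0, ∫ u in Ioi v, F (u, v) := by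
        rw [setIntegral_congr_fun measurableSet_Ioi hright,
          setIntegral_eq_integral_of_forall_compl_eq_zero fun v hv => ?_]
        simp [indicator_of_notMem (fun h : (_, v) ∈ S => hv h.1)]

theorem integral_Ioi_rpow_mul_sub_rpow {a b v : ℝ} (ha : 0 < a) (hb : 0 < b) (hv : 0 < v) :
    ∫ u in Ioi v, u ^ (-(a + b)) * (u - v) ^ (a - 1) =
      v ^ (-b) * (Gamma a * Gamma b / Gamma (a + b)) := by
  rw [integral_Ioi_rpow_mul_sub_rpow_eq_integral_Ioo hv,
    Real.integral_Ioo_rpow_mul_one_sub_rpow ha hb]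

theorem integral_Ioi_koberFirst_kernel {α ζ s v : ℝ} (hα : 0 < α) (hs : 0 < ζ + 1 - s)
    (hv : 0 < v) (c : ℝ) :
    ∫ u in Ioi v, u ^ (s - 1) * (u ^ (-ζ - α) / Gamma α) * ((u - v) ^ (α - 1) * v ^ ζ * c) =
      Gamma (ζ + 1 - s) / Gamma (α + ζ + 1 - s) * (v ^ (s - 1) * c) := by
  have hkernel : ∀ u ∈ Ioi v,
      u ^ (s - 1) * (u ^ (-ζ - α) / Gamma α) * ((u - v) ^ (α - 1) * v ^ ζ * c) =
        v ^ ζ * c / Gamma α * (u ^ (-(α + (ζ + 1 - s))) * (u - v) ^ (α - 1)) := fun u hu => by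
    rw [show -(α + (ζ + 1 - s)) = (s - 1) + (-ζ - α) by ring, rpow_add (hv.trans hu)]
    ring
  rw [setIntegral_congr_fun measurableSet_Ioi hkernel, integral_const_mul,
    integral_Ioi_rpow_mul_sub_rpow hα hs hv, show α + (ζ + 1 - s) = α + ζ + 1 - s by ring]
  have hvv : v ^ ζ * v ^ (-(ζ + 1 - s)) = v ^ (s - 1) := by
    rw [← rpow_add hv]
    ring_nf
  field_simp [(Gamma_pos_of_pos hα).ne']
  rw [← hvv]
  ring

theorem stmt13_general (α ζ s : ℝ) (hα : 0 < α) (hs : 0 < ζ + 1 - s)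
    (f : ℝ → ℝ)
    (hFubini : IntegrableOn
      (fun p : ℝ × ℝ => p.1 ^ (s - 1) * (p.1 ^ (-ζ - α) / Real.Gamma α) *
        ((p.1 - p.2) ^ (α - 1) * p.2 ^ ζ * f p.2))
      {p : ℝ × ℝ | 0 < p.2 ∧ p.2 < p.1}) :
    ∫ u in Set.Ioi (0:ℝ), u ^ (s - 1) * koberFirst ζ α f u =
      (Real.Gamma (ζ + 1 - s) / Real.Gamma (α + ζ + 1 - s)) *
        ∫ v in Set.Ioi (0:ℝ), v ^ (s - 1) * f v := by
  have hmul : ∀ u, u ^ (s - 1) * koberFirst ζ α f u = ∫ v in Ioo 0 u,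
      u ^ (s - 1) * (u ^ (-ζ - α) / Gamma α) * ((u - v) ^ (α - 1) * v ^ ζ * f v) := fun u => by
    rw [koberFirst, ← mul_assoc, ← integral_const_mul]
  simp_rw [hmul]
  rw [integral_Ioi_integral_Ioo_eq_integral_Ioi_integral_Ioi hFubini,
    setIntegral_congr_fun measurableSet_Ioi fun v hv =>
      integral_Ioi_koberFirst_kernel hα hs hv (f v),
    integral_const_mul]

theorem stmt13 (α ζ s : ℝ) (hα : 0 < α) (hζ : 0 < ζ) (hs : 0 < ζ + 1 - s)
    (f : ℝ → ℝ) (hf_nonneg : ∀ x, 0 ≤ f x) (hf_meas : Measurable f)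
    (hf_mellin : IntegrableOn (fun v => v ^ (s - 1) * f v) (Set.Ioi 0))
    (hFubini : IntegrableOn
      (fun p : ℝ × ℝ => p.1 ^ (s - 1) * (p.1 ^ (-ζ - α) / Real.Gamma α) *
        ((p.1 - p.2) ^ (α - 1) * p.2 ^ ζ * f p.2))
      {p : ℝ × ℝ | 0 < p.2 ∧ p.2 < p.1}) :
    ∫ u in Set.Ioi (0:ℝ), u ^ (s - 1) * koberFirst ζ α f u =
      (Real.Gamma (ζ + 1 - s) / Real.Gamma (α + ζ + 1 - s)) *
        ∫ v in Set.Ioi (0:ℝ), v ^ (s - 1) * f v :=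
  stmt13_general α ζ s hα hs f hFubini
end
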